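/- Let f = f_0 + ... + f_e + f_d be the weighted homogeneous decomposition of a polynomial f with respect to positive weights w, with f_d ≠ 0 the top-degree component, f_e ≠ 0, and f_j = 0 for e < j < d. If p(t) = Σ_{m ≥ s} t^m * c_m is a formal Laurent path written via the weighted ℂ*-action (with c_s = c_0 ≠ 0, s < 0) such that f(p(t)) is bounded as t → 0 and the gradient identity df(p(t))/dt = Σ_i f_{x_i}(p(t)) p_i'(t) yields df(p(t)) − Σ_i w_i f_{x_i}(p(t)) p_i(t) = (d−e) f_e(p(t)) + higher order terms, then the leading coefficient satisfies f_e(c_0) = 0. -/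

import Mathlib

/-!
Euler's identity gives `d • f - ∑ wᵢ xᵢ ∂ᵢf = ∑_{j ≤ d} (d - j) f_j`. Along the path the `t^{se}`
coefficient of the left side vanishes, since `f(p)` has no terms of negative order and every
`∂ᵢf(p)` is zero. On the right, writing `pᵢ = t^{s wᵢ} qᵢ` with power series `qᵢ` gives
`f_j(p) = t^{sj} f_j(q)`, so `f_j(p)` starts at order `sj` with coefficient `f_j(c₀)`. The terms with
`j < e` do not reach `t^{se}` (as `s < 0`), those with `e < j < d` vanish and the one with `j = d`
has the factor `0`, which leaves `(d - e) f_e(c₀) = 0`.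
-/

open MvPolynomial HahnSeries
open scoped LaurentSeries

namespace LaurentSeries

variable {R : Type*} [CommSemiring R]

theorem coeff_single_mul_coe (r k : ℤ) (F : PowerSeries R) :
    (single r 1 * (F : R⸨X⸩)).coeff k =
      if k < r then 0 else PowerSeries.coeff (k - r).natAbs F := by
  rw [coeff_single_mul, PowerSeries.coeff_coe, one_mul]
  simp only [sub_neg]

theorem exists_eq_single_mul_coe {x : R⸨X⸩} {r : ℤ} (hx : ∀ k < r, x.coeff k = 0) :
    ∃ F : PowerSeries R, x = single r 1 * (F : R⸨X⸩) ∧ PowerSeries.constantCoeff F = x.coeff r := by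
  refine ⟨PowerSeries.mk fun n => x.coeff (r + n), ?_, by simp⟩
  ext k
  rw [coeff_single_mul_coe]
  split_ifs with hk
  · exact hx k hk
  · rw [PowerSeries.coeff_mk]
    congr 1
    omega

end LaurentSeries

namespace MvPolynomial.IsWeightedHomogeneous

variable {R σ : Type*} [CommSemiring R] {w : σ → ℕ} {φ : MvPolynomial σ R} {j : ℕ}

theorem aeval_pow_mul {A : Type*} [CommSemiring A] [Algebra R A]
    (hφ : φ.IsWeightedHomogeneous w j) (u : A) (x : σ → A) :
    aeval (fun i => u ^ w i * x i) φ = u ^ j * aeval x φ := by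
  induction hφ using IsWeightedHomogeneous.induction_on with
  | zero => simp
  | add p q _ _ hp hq => rw [map_add, map_add, hp, hq, mul_add]
  | monomial d r hr =>
    simp only [aeval_monomial, mul_pow, ← hr, Finsupp.weight_apply, Finsupp.sum, Finsupp.prod,
      Finset.prod_mul_distrib, ← pow_mul, Finset.prod_pow_eq_pow_sum, smul_eq_mul, mul_comm (w _)]
    ring

variable {p : σ → R⸨X⸩} {s : ℤ}

theorem exists_aeval_eq_single_mul_coe (hφ : φ.IsWeightedHomogeneous w j)
    (hp : ∀ i, ∀ k < s * w i, (p i).coeff k = 0) :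
    ∃ F : PowerSeries R, aeval p φ = single (s * j) 1 * (F : R⸨X⸩) ∧
      PowerSeries.constantCoeff F = eval (fun i => (p i).coeff (s * w i)) φ := by
  choose Q hpQ hQ using fun i => LaurentSeries.exists_eq_single_mul_coe (hp i)
  have hsingle (m : ℕ) : (single s 1 : R⸨X⸩) ^ m = single (s * m) 1 := by
    rw [single_pow, one_pow, nsmul_eq_mul, mul_comm]
  refine ⟨aeval Q φ, ?_, ?_⟩
  · have hp' : p = fun i => single s 1 ^ w i * ((Q i : PowerSeries R) : R⸨X⸩) :=
      _root_.funext fun i => by rw [hsingle, hpQ i]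
    rw [hp', hφ.aeval_pow_mul, hsingle, map_aeval, coe_eval₂Hom, aeval_def]
    congr
  · simp_rw [map_aeval, coe_eval₂Hom, hQ]
    congr

theorem coeff_aeval_eq_zero_of_lt (hφ : φ.IsWeightedHomogeneous w j)
    (hp : ∀ i, ∀ k < s * w i, (p i).coeff k = 0) {k : ℤ} (hk : k < s * j) :
    (aeval p φ).coeff k = 0 := by
  obtain ⟨F, hF, -⟩ := hφ.exists_aeval_eq_single_mul_coe hp
  rw [hF, LaurentSeries.coeff_single_mul_coe, if_pos hk]

theorem coeff_aeval_eq_eval_coeff (hφ : φ.IsWeightedHomogeneous w j)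
    (hp : ∀ i, ∀ k < s * w i, (p i).coeff k = 0) :
    (aeval p φ).coeff (s * j) = eval (fun i => (p i).coeff (s * w i)) φ := by
  obtain ⟨F, hF, hF0⟩ := hφ.exists_aeval_eq_single_mul_coe hp
  rw [hF, LaurentSeries.coeff_single_mul_coe, if_neg (lt_irrefl _), sub_self, Int.natAbs_zero,
    PowerSeries.coeff_zero_eq_constantCoeff_apply, hF0]

end MvPolynomial.IsWeightedHomogeneous

namespace MvPolynomial

variable {R σ : Type*} {w : σ → ℕ} {d : ℕ}

theorem sum_range_weightedHomogeneousComponent [CommSemiring R] {φ : MvPolynomial σ R}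
    (hφ : weightedTotalDegree w φ ≤ d) :
    ∑ j ∈ Finset.range (d + 1), weightedHomogeneousComponent w j φ = φ := by
  conv_rhs => rw [← sum_weightedHomogeneousComponent w φ]
  refine (finsum_eq_sum_of_support_subset _ fun j hj => ?_).symm
  rw [Finset.coe_range, Set.mem_Iio, Nat.lt_succ_iff]
  by_contra! hdj
  exact hj (weightedHomogeneousComponent_eq_zero j φ (hφ.trans_lt hdj))

theorem sum_weight_X_mul_pderiv_eq_sum [CommSemiring R] [Fintype σ] {φ : MvPolynomial σ R}
    (hφ : weightedTotalDegree w φ ≤ d) :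
    ∑ i, w i • (X i * pderiv i φ) =
      ∑ j ∈ Finset.range (d + 1), j • weightedHomogeneousComponent w j φ := by
  conv_lhs => rw [← sum_range_weightedHomogeneousComponent hφ]
  simp_rw [map_sum, Finset.mul_sum, Finset.smul_sum]
  rw [Finset.sum_comm]
  exact Finset.sum_congr rfl fun j _ =>
    (weightedHomogeneousComponent_isWeightedHomogeneous j φ).sum_weight_X_mul_pderiv

theorem nsmul_sub_sum_weight_X_mul_pderiv [CommRing R] [Fintype σ] {φ : MvPolynomial σ R}
    (hφ : weightedTotalDegree w φ ≤ d) :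
    d • φ - ∑ i, w i • (X i * pderiv i φ) =
      ∑ j ∈ Finset.range (d + 1), (d - j) • weightedHomogeneousComponent w j φ := by
  rw [sum_weight_X_mul_pderiv_eq_sum hφ]
  nth_rw 1 [← sum_range_weightedHomogeneousComponent hφ]
  rw [Finset.smul_sum, ← Finset.sum_sub_distrib]
  refine Finset.sum_congr rfl fun j hj => ?_
  rw [sub_nsmul _ (Nat.lt_succ_iff.mp (Finset.mem_range.mp hj)), sub_eq_add_neg]

end MvPolynomial

theorem laurent_path_leading_coefficient_general (n : ℕ) (w : Fin (n + 1) → ℕ)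
    (f : MvPolynomial (Fin (n + 1)) ℂ) (d e : ℕ) (he : 0 < e) (hed : e < d)
    (htop : f.weightedTotalDegree w = d)
    (hgap : ∀ j : ℕ, e < j → j < d → weightedHomogeneousComponent w j f = 0)
    (s : ℤ) (hs : s < 0) (c0 : Fin (n + 1) → ℂ)
    (p : Fin (n + 1) → LaurentSeries ℂ)
    (hp_supp : ∀ i, ∀ k : ℤ, (p i).coeff k ≠ 0 → (w i : ℤ) ∣ k ∧ s * (w i : ℤ) ≤ k)
    (hp_lead : ∀ i, (p i).coeff (s * (w i : ℤ)) = c0 i)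
    (hbound : ∀ k : ℤ, k < 0 → ((aeval p f : LaurentSeries ℂ)).coeff k = 0)
    (hgrad : ∀ i, aeval p (pderiv i f) = 0) :
    eval c0 (weightedHomogeneousComponent w e f) = 0 := by
  have hp : ∀ i, ∀ k < s * w i, (p i).coeff k = 0 := fun i k hk =>
    not_not.mp fun h => (hp_supp i k h).2.not_gt hk
  have hlead : c0 = fun i => (p i).coeff (s * w i) := funext fun i => (hp_lead i).symm
  have hcomponent (j : ℕ) : (weightedHomogeneousComponent w j f).IsWeightedHomogeneous w j :=
    weightedHomogeneousComponent_isWeightedHomogeneous j f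
  have hpath : (aeval p (d • f - ∑ i, w i • (X i * pderiv i f))).coeff (s * e) = 0 := by
    simp only [map_sub, map_sum, map_nsmul, map_mul, hgrad, mul_zero, smul_zero,
      Finset.sum_const_zero, sub_zero, HahnSeries.coeff_smul,
      hbound (s * e) (mul_neg_of_neg_of_pos hs (by exact_mod_cast he))]
  rw [nsmul_sub_sum_weight_X_mul_pderiv htop.le, map_sum, HahnSeries.coeff_sum,
    Finset.sum_eq_single e] at hpath
  · rwa [map_nsmul, HahnSeries.coeff_smul, (hcomponent e).coeff_aeval_eq_eval_coeff hp, ← hlead,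
      smul_eq_zero, or_iff_right (Nat.sub_ne_zero_of_lt hed)] at hpath
  · intro j hj hje
    rw [map_nsmul, HahnSeries.coeff_smul]
    rcases lt_trichotomy j e with hlt | rfl | hgt
    · rw [(hcomponent j).coeff_aeval_eq_zero_of_lt hp
        (mul_lt_mul_of_neg_left (by exact_mod_cast hlt) hs), smul_zero]
    · exact absurd rfl hje
    · rcases (Nat.lt_succ_iff.mp (Finset.mem_range.mp hj)).lt_or_eq with hjd | rfl
      · rw [hgap j hgt hjd, map_zero, HahnSeries.coeff_zero, smul_zero]
      · rw [Nat.sub_self, zero_smul]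
  · exact fun he' => absurd (Finset.mem_range.mpr (by omega)) he'

/-- The key coefficient computation in Lemma 1 of the paper.  A formal Laurent path
`p(t) = Σ_{m ≥ s} t^m * c_m` (written via the weighted `ℂ*`-action, so the `i`-th
coordinate of `p` is a Laurent series whose exponents are multiples of `w i` at least
`s * w i`, with leading coefficient `c0 i` at `s * w i`), with `s < 0` and `c0 ≠ 0`,
along which `f` is bounded as `t → 0` (no negative-order terms in `f(p(t))`) and the
gradient of `f` vanishes (so that `d·f(p(t)) − Σ w_i f_{x_i}(p(t)) p_i(t)` reduces to
`(d−e) f_e(p(t)) + higher order terms`), forces `f_e(c0) = 0`. -/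
theorem laurent_path_leading_coefficient (n : ℕ) (w : Fin (n + 1) → ℕ) (hw : ∀ i, 0 < w i)
    (f : MvPolynomial (Fin (n + 1)) ℂ) (d e : ℕ) (he : 0 < e) (hed : e < d)
    (htop : f.weightedTotalDegree w = d)
    (hfd : weightedHomogeneousComponent w d f ≠ 0)
    (hgap : ∀ j : ℕ, e < j → j < d → weightedHomogeneousComponent w j f = 0)
    (s : ℤ) (hs : s < 0) (c0 : Fin (n + 1) → ℂ) (hc0 : c0 ≠ 0)
    (p : Fin (n + 1) → LaurentSeries ℂ)
    (hp_supp : ∀ i, ∀ k : ℤ, (p i).coeff k ≠ 0 → (w i : ℤ) ∣ k ∧ s * (w i : ℤ) ≤ k)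
    (hp_lead : ∀ i, (p i).coeff (s * (w i : ℤ)) = c0 i)
    (hbound : ∀ k : ℤ, k < 0 → ((aeval p f : LaurentSeries ℂ)).coeff k = 0)
    (hgrad : ∀ i, aeval p (pderiv i f) = 0) :
    eval c0 (weightedHomogeneousComponent w e f) = 0 :=
  laurent_path_leading_coefficient_general n w f d e he hed htop hgap s hs c0 p hp_supp hp_lead
    hbound hgrad
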